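/- Let K₁, K₂ ≥ 0 and let A(t) = Σ_{ν≥1} A_ν t^ν and B(t) = Σ_{ν≥1} B_ν t^ν be real formal power series with zero constant term satisfying 0 ≤ A_ν ≤ K₁·M_ν and 0 ≤ B_ν ≤ K₂·M_ν for all ν ≥ 1. Then for every ν ≥ 1 the degree-ν coefficient of exp(A(t))·exp(B(t)) − 1 is at most λ^{-1}·(e^{(K₁+K₂)λ} − 1)·M_ν. -/

import Mathlib

/-- The exponential `exp(A(t)) = Σ_{l≥0} A(t)^l / l!` of a formal power series, defined
coefficientwise (the sum of coefficients converges trivially when `A` has zero constant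
term, since then only the terms with `l ≤ ν` contribute in degree `ν`). -/
noncomputable def pexp (A : PowerSeries ℝ) : PowerSeries ℝ :=
  PowerSeries.mk fun ν => ∑' (l : ℕ), (1 / (Nat.factorial l : ℝ)) * PowerSeries.coeff (R := ℝ) ν (A ^ l)

/-!
Coefficientwise majorization. From `Σ_{a+b=n} 1/(a² b²) ≤ 8/n²` the majorant satisfies
`M² ≤ λ M`, hence `M^(l+1) ≤ λ^l M`. For nonnegative `A ≤ K₁ M` and `B ≤ K₂ M` this gives
`A^k B^l ≤ λ⁻¹ (K₁ λ)^k (K₂ λ)^l M` whenever `k + l ≥ 1`; in degree `ν` only `k, l ≤ ν`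
contribute to `exp A · exp B`, the term `k = l = 0` is cancelled by the `- 1`, and the
remaining sum of `(K₁ λ)^k (K₂ λ)^l / (k! l!)` is at most `e^{(K₁ + K₂) λ} - 1`.
-/

open PowerSeries Finset
open scoped Nat

namespace PowerSeries

section Majorization

variable {R : Type*} [CommSemiring R] [PartialOrder R] [IsOrderedRing R] {f g f' g' : R⟦X⟧}

theorem coeff_mul_nonneg (hf : ∀ n, 0 ≤ coeff n f) (hg : ∀ n, 0 ≤ coeff n g) (n : ℕ) :
    0 ≤ coeff n (f * g) := by
  rw [coeff_mul]
  exact sum_nonneg fun p _ => mul_nonneg (hf _) (hg _)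

theorem coeff_pow_nonneg (hf : ∀ n, 0 ≤ coeff n f) (k n : ℕ) : 0 ≤ coeff n (f ^ k) := by
  induction k generalizing n with
  | zero => rw [pow_zero, coeff_one]; split <;> simp
  | succ k ih => rw [pow_succ]; exact coeff_mul_nonneg ih hf n

theorem coeff_mul_le_coeff_mul (hf : ∀ n, 0 ≤ coeff n f) (hff' : ∀ n, coeff n f ≤ coeff n f')
    (hg : ∀ n, 0 ≤ coeff n g) (hgg' : ∀ n, coeff n g ≤ coeff n g') (n : ℕ) :
    coeff n (f * g) ≤ coeff n (f' * g') := by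
  rw [coeff_mul, coeff_mul]
  exact sum_le_sum fun p _ => mul_le_mul (hff' _) (hgg' _) (hg _) ((hf _).trans (hff' _))

theorem coeff_pow_le_coeff_pow (hf : ∀ n, 0 ≤ coeff n f) (hff' : ∀ n, coeff n f ≤ coeff n f')
    (k n : ℕ) : coeff n (f ^ k) ≤ coeff n (f' ^ k) := by
  induction k generalizing n with
  | zero => rfl
  | succ k ih =>
    rw [pow_succ, pow_succ]
    exact coeff_mul_le_coeff_mul (coeff_pow_nonneg hf k) ih hf hff' n

theorem coeff_pow_mul_pow_le {F : R⟦X⟧} {K₁ K₂ : R}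
    (hf : ∀ n, 0 ≤ coeff n f) (hfF : ∀ n, coeff n f ≤ K₁ * coeff n F)
    (hg : ∀ n, 0 ≤ coeff n g) (hgF : ∀ n, coeff n g ≤ K₂ * coeff n F) (k l n : ℕ) :
    coeff n (f ^ k * g ^ l) ≤ K₁ ^ k * K₂ ^ l * coeff n (F ^ (k + l)) := by
  have hfF' : ∀ n, coeff n f ≤ coeff n (K₁ • F) := by simpa only [coeff_smul, smul_eq_mul]
  have hgF' : ∀ n, coeff n g ≤ coeff n (K₂ • F) := by simpa only [coeff_smul, smul_eq_mul]
  calc coeff n (f ^ k * g ^ l) ≤ coeff n ((K₁ • F) ^ k * (K₂ • F) ^ l) :=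
        coeff_mul_le_coeff_mul (coeff_pow_nonneg hf k) (coeff_pow_le_coeff_pow hf hfF' k)
          (coeff_pow_nonneg hg l) (coeff_pow_le_coeff_pow hg hgF' l) n
    _ = K₁ ^ k * K₂ ^ l * coeff n (F ^ (k + l)) := by
        rw [smul_pow, smul_pow, smul_mul_smul_comm, ← pow_add, coeff_smul, smul_eq_mul]

theorem coeff_pow_succ_le {F : R⟦X⟧} {r : R} (hr : 0 ≤ r) (hF : ∀ n, 0 ≤ coeff n F)
    (hFF : ∀ n, coeff n (F * F) ≤ r * coeff n F) (l n : ℕ) :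
    coeff n (F ^ (l + 1)) ≤ r ^ l * coeff n F := by
  induction l generalizing n with
  | zero => simp
  | succ l ih =>
    have ih' : ∀ n, coeff n (F ^ (l + 1)) ≤ coeff n (r ^ l • F) := by
      simpa only [coeff_smul, smul_eq_mul] using ih
    calc coeff n (F ^ (l + 1 + 1)) ≤ coeff n (r ^ l • F * F) := by
          rw [pow_succ]
          exact coeff_mul_le_coeff_mul (coeff_pow_nonneg hF _) ih' hF (fun _ => le_rfl) n
      _ = r ^ l * coeff n (F * F) := by rw [smul_mul_assoc, coeff_smul, smul_eq_mul]
      _ ≤ r ^ (l + 1) * coeff n F := by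
          rw [pow_succ, mul_assoc]
          exact mul_le_mul_of_nonneg_left (hFF n) (pow_nonneg hr l)

end Majorization

theorem coeff_pow_eq_zero_of_lt {R : Type*} [CommSemiring R] {f : R⟦X⟧}
    (hf : constantCoeff f = 0) {n k : ℕ} (h : n < k) : coeff n (f ^ k) = 0 :=
  X_pow_dvd_iff.mp (pow_dvd_pow_of_dvd (X_dvd_iff.mpr hf) k) n h

theorem coeff_mul_congr {R : Type*} [CommSemiring R] {f f' g g' : R⟦X⟧} {n : ℕ}
    (hf : ∀ m ≤ n, coeff m f = coeff m f') (hg : ∀ m ≤ n, coeff m g = coeff m g') :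
    coeff n (f * g) = coeff n (f' * g') := by
  rw [coeff_mul, coeff_mul]
  refine sum_congr rfl fun p hp => ?_
  rw [hf _ (HasAntidiagonal.antidiagonal.fst_le hp), hg _ (HasAntidiagonal.antidiagonal.snd_le hp)]

end PowerSeries

theorem coeff_pexp_eq_coeff_sum {A : ℝ⟦X⟧} (hA : constantCoeff A = 0) {N n : ℕ} (hn : n ≤ N) :
    coeff n (pexp A) = coeff n (∑ k ∈ range (N + 1), (k ! : ℝ)⁻¹ • A ^ k) := by
  simp only [pexp, coeff_mk, map_sum, coeff_smul, smul_eq_mul, one_div]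
  refine tsum_eq_sum fun k hk => ?_
  rw [coeff_pow_eq_zero_of_lt hA (by simp at hk; omega), mul_zero]

theorem coeff_pexp_mul_pexp {A B : ℝ⟦X⟧} (hA : constantCoeff A = 0) (hB : constantCoeff B = 0)
    (n : ℕ) : coeff n (pexp A * pexp B) = ∑ p ∈ range (n + 1) ×ˢ range (n + 1),
      (p.1 ! : ℝ)⁻¹ * (p.2 ! : ℝ)⁻¹ * coeff n (A ^ p.1 * B ^ p.2) := by
  rw [coeff_mul_congr (fun _ => coeff_pexp_eq_coeff_sum hA) (fun _ => coeff_pexp_eq_coeff_sum hB),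
    sum_mul_sum, ← sum_product', map_sum]
  refine sum_congr rfl fun p _ => ?_
  rw [smul_mul_smul_comm, coeff_smul, smul_eq_mul]

theorem sum_erase_zero_pow_div_factorial_mul_le {x y : ℝ} (hx : 0 ≤ x) (hy : 0 ≤ y) (N : ℕ) :
    ∑ p ∈ (range (N + 1) ×ˢ range (N + 1)).erase 0, x ^ p.1 / p.1 ! * (y ^ p.2 / p.2 !)
      ≤ Real.exp (x + y) - 1 := by
  have hsum : ∑ p ∈ range (N + 1) ×ˢ range (N + 1), x ^ p.1 / p.1 ! * (y ^ p.2 / p.2 !)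
      ≤ Real.exp x * Real.exp y := by
    rw [sum_product' (f := fun k l => x ^ k / k ! * (y ^ l / l !)), ← sum_mul_sum]
    exact mul_le_mul (Real.sum_le_exp_of_nonneg hx _) (Real.sum_le_exp_of_nonneg hy _)
      (sum_nonneg fun _ _ => by positivity) (Real.exp_pos x).le
  rw [← add_sum_erase _ _ (by simp : (0 : ℕ × ℕ) ∈ range (N + 1) ×ˢ range (N + 1))] at hsum
  rw [Real.exp_add]
  simp only [Prod.fst_zero, Prod.snd_zero, pow_zero, Nat.factorial_zero, Nat.cast_one, div_one,
    mul_one] at hsum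
  linarith

theorem coeff_pexp_mul_pexp_sub_one_le {A B F : ℝ⟦X⟧} {K₁ K₂ r : ℝ} (hr : 0 < r)
    (hK₁ : 0 ≤ K₁) (hK₂ : 0 ≤ K₂) (hF : ∀ n, 0 ≤ coeff n F)
    (hFF : ∀ n, coeff n (F * F) ≤ r * coeff n F)
    (hA0 : constantCoeff A = 0) (hA : ∀ n, 0 ≤ coeff n A) (hAF : ∀ n, coeff n A ≤ K₁ * coeff n F)
    (hB0 : constantCoeff B = 0) (hB : ∀ n, 0 ≤ coeff n B) (hBF : ∀ n, coeff n B ≤ K₂ * coeff n F)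
    {ν : ℕ} (hν : ν ≠ 0) :
    coeff ν (pexp A * pexp B - 1) ≤ r⁻¹ * (Real.exp ((K₁ + K₂) * r) - 1) * coeff ν F := by
  have hterm : ∀ p ∈ (range (ν + 1) ×ˢ range (ν + 1)).erase 0,
      (p.1 ! : ℝ)⁻¹ * (p.2 ! : ℝ)⁻¹ * coeff ν (A ^ p.1 * B ^ p.2)
        ≤ r⁻¹ * coeff ν F * ((K₁ * r) ^ p.1 / p.1 ! * ((K₂ * r) ^ p.2 / p.2 !)) := by
    intro p hp
    obtain ⟨m, hm⟩ : ∃ m, p.1 + p.2 = m + 1 := Nat.exists_eq_add_one.mpr <| Nat.pos_of_ne_zero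
      fun h => (mem_erase.mp hp).1 <| Prod.ext_iff.mpr (Nat.add_eq_zero_iff.mp h)
    calc (p.1 ! : ℝ)⁻¹ * (p.2 ! : ℝ)⁻¹ * coeff ν (A ^ p.1 * B ^ p.2)
        ≤ (p.1 ! : ℝ)⁻¹ * (p.2 ! : ℝ)⁻¹ * (K₁ ^ p.1 * K₂ ^ p.2 * (r ^ m * coeff ν F)) := by
          gcongr
          refine (coeff_pow_mul_pow_le hA hAF hB hBF _ _ ν).trans ?_
          rw [hm]
          gcongr
          exact coeff_pow_succ_le hr.le hF hFF m ν
      _ = r⁻¹ * coeff ν F * ((K₁ * r) ^ p.1 / p.1 ! * ((K₂ * r) ^ p.2 / p.2 !)) := by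
          have hr' : r ^ m = r⁻¹ * (r ^ p.1 * r ^ p.2) := by
            rw [← pow_add, hm, pow_succ', inv_mul_cancel_left₀ hr.ne']
          rw [hr', mul_pow, mul_pow]
          ring
  rw [map_sub, coeff_one, if_neg hν, sub_zero, coeff_pexp_mul_pexp hA0 hB0,
    ← sum_erase _ (a := 0) (by simp [coeff_one, hν])]
  calc _ ≤ _ := sum_le_sum hterm
    _ = r⁻¹ * coeff ν F * ∑ p ∈ (range (ν + 1) ×ˢ range (ν + 1)).erase 0,
          (K₁ * r) ^ p.1 / p.1 ! * ((K₂ * r) ^ p.2 / p.2 !) := (mul_sum _ _ _).symm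
    _ ≤ r⁻¹ * coeff ν F * (Real.exp ((K₁ + K₂) * r) - 1) := by
        rw [add_mul]
        gcongr
        · exact mul_nonneg (inv_nonneg.mpr hr.le) (hF ν)
        · exact sum_erase_zero_pow_div_factorial_mul_le (by positivity) (by positivity) ν
    _ = r⁻¹ * (Real.exp ((K₁ + K₂) * r) - 1) * coeff ν F := by ring

-- `1 / (a b) = (1 / a + 1 / b) / (a + b)`, then `(x + y)² ≤ 2 (x² + y²)`.
theorem inv_sq_mul_inv_sq_le (a b : ℕ) :
    ((a : ℝ) ^ 2)⁻¹ * ((b : ℝ) ^ 2)⁻¹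
      ≤ 2 * (((a + b : ℕ) : ℝ) ^ 2)⁻¹ * (((a : ℝ) ^ 2)⁻¹ + ((b : ℝ) ^ 2)⁻¹) := by
  rcases a.eq_zero_or_pos with rfl | ha
  · rw [Nat.cast_zero, zero_pow two_ne_zero, inv_zero, zero_mul]
    positivity
  rcases b.eq_zero_or_pos with rfl | hb
  · rw [Nat.cast_zero, zero_pow two_ne_zero, inv_zero, mul_zero]
    positivity
  have ha' : (0 : ℝ) < a := by exact_mod_cast ha
  have hb' : (0 : ℝ) < b := by exact_mod_cast hb
  push_cast
  field_simp
  nlinarith [sq_nonneg ((a : ℝ) - b), mul_pos ha' hb']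

-- Terms with a zero index vanish because `(0 ^ 2)⁻¹ = 0`.
theorem sum_antidiagonal_inv_sq_mul_inv_sq_le (n : ℕ) :
    ∑ p ∈ antidiagonal n, ((p.1 : ℝ) ^ 2)⁻¹ * ((p.2 : ℝ) ^ 2)⁻¹ ≤ 8 * ((n : ℝ) ^ 2)⁻¹ := by
  have hrange : ∑ k ∈ range (n + 1), ((k : ℝ) ^ 2)⁻¹ ≤ 2 := by
    rw [range_eq_Ico, sum_eq_sum_Ico_succ_bot n.succ_pos, ← Order.succ_eq_add_one,
      Ico_succ_left_eq_Ioo]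
    simpa using sum_Ioo_inv_sq_le (α := ℝ) 0 (n + 1)
  have hfst : ∑ p ∈ antidiagonal n, ((p.1 : ℝ) ^ 2)⁻¹ = ∑ k ∈ range (n + 1), ((k : ℝ) ^ 2)⁻¹ :=
    Nat.sum_antidiagonal_eq_sum_range_succ_mk (fun p => ((p.1 : ℝ) ^ 2)⁻¹) n
  have hsnd : ∑ p ∈ antidiagonal n, ((p.2 : ℝ) ^ 2)⁻¹ = ∑ p ∈ antidiagonal n, ((p.1 : ℝ) ^ 2)⁻¹ :=
    (Nat.sum_antidiagonal_swap (f := fun p => ((p.2 : ℝ) ^ 2)⁻¹)).symm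
  calc ∑ p ∈ antidiagonal n, ((p.1 : ℝ) ^ 2)⁻¹ * ((p.2 : ℝ) ^ 2)⁻¹
      ≤ ∑ p ∈ antidiagonal n, 2 * ((n : ℝ) ^ 2)⁻¹ * (((p.1 : ℝ) ^ 2)⁻¹ + ((p.2 : ℝ) ^ 2)⁻¹) :=
        sum_le_sum fun p hp => mem_antidiagonal.mp hp ▸ inv_sq_mul_inv_sq_le p.1 p.2
    _ = 2 * ((n : ℝ) ^ 2)⁻¹ * (2 * ∑ k ∈ range (n + 1), ((k : ℝ) ^ 2)⁻¹) := by
        rw [← mul_sum, sum_add_distrib, hsnd, hfst]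
        ring
    _ ≤ 8 * ((n : ℝ) ^ 2)⁻¹ := by nlinarith [inv_nonneg.mpr (sq_nonneg (n : ℝ))]

/-- The majorant `M(t)` is `majorant (1 / (16 c)) c`; its constant coefficient is `0` because
`x / 0 = 0` in `ℝ`. -/
noncomputable def majorant (C c : ℝ) : ℝ⟦X⟧ :=
  mk fun ν => C * c ^ ν / (ν : ℝ) ^ 2

theorem coeff_majorant (C c : ℝ) (n : ℕ) : coeff n (majorant C c) = C * c ^ n / (n : ℝ) ^ 2 :=
  coeff_mk _ _

theorem coeff_majorant_nonneg {C c : ℝ} (hC : 0 ≤ C) (hc : 0 ≤ c) (n : ℕ) :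
    0 ≤ coeff n (majorant C c) := by
  rw [coeff_majorant]
  positivity

theorem coeff_majorant_mul_self_le {C c : ℝ} (hc : 0 ≤ c) (n : ℕ) :
    coeff n (majorant C c * majorant C c) ≤ 8 * C * coeff n (majorant C c) := by
  have hterm : ∀ p ∈ antidiagonal n, coeff p.1 (majorant C c) * coeff p.2 (majorant C c)
      = C ^ 2 * c ^ n * (((p.1 : ℝ) ^ 2)⁻¹ * ((p.2 : ℝ) ^ 2)⁻¹) := by
    intro p hp
    rw [coeff_majorant, coeff_majorant, ← mem_antidiagonal.mp hp, pow_add]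
    ring
  rw [coeff_mul, sum_congr rfl hterm, ← mul_sum, coeff_majorant]
  calc C ^ 2 * c ^ n * ∑ p ∈ antidiagonal n, ((p.1 : ℝ) ^ 2)⁻¹ * ((p.2 : ℝ) ^ 2)⁻¹
      ≤ C ^ 2 * c ^ n * (8 * ((n : ℝ) ^ 2)⁻¹) := by
        gcongr
        exact sum_antidiagonal_inv_sq_mul_inv_sq_le n
    _ = 8 * C * (C * c ^ n / (n : ℝ) ^ 2) := by ring

/-- Fix `c > 0`, `λ = 1/c`, and `M ν = (1/(16c))·c^ν/ν²`. Let
`K₁, K₂ ≥ 0` and let `A(t)`, `B(t)` be real formal power series with zero constant term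
with `0 ≤ A_ν ≤ K₁·M ν` and `0 ≤ B_ν ≤ K₂·M ν` for all `ν ≥ 1`. Then for every `ν ≥ 1`
the degree-`ν` coefficient of `exp(A(t))·exp(B(t)) − 1` is at most
`λ⁻¹·(e^{(K₁+K₂)λ} − 1)·M ν`. -/
theorem stmt_6 (c lam K₁ K₂ : ℝ) (hc : 0 < c) (hlam : lam = 1 / c)
    (hK₁ : 0 ≤ K₁) (hK₂ : 0 ≤ K₂)
    (M : ℕ → ℝ) (hM : ∀ ν : ℕ, M ν = 1 / (16 * c) * c ^ ν / (ν : ℝ) ^ 2)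
    (A B : PowerSeries ℝ)
    (hA0 : PowerSeries.constantCoeff (R := ℝ) A = 0) (hB0 : PowerSeries.constantCoeff (R := ℝ) B = 0)
    (hAnonneg : ∀ ν : ℕ, 1 ≤ ν → 0 ≤ PowerSeries.coeff (R := ℝ) ν A)
    (hAle : ∀ ν : ℕ, 1 ≤ ν → PowerSeries.coeff (R := ℝ) ν A ≤ K₁ * M ν)
    (hBnonneg : ∀ ν : ℕ, 1 ≤ ν → 0 ≤ PowerSeries.coeff (R := ℝ) ν B)
    (hBle : ∀ ν : ℕ, 1 ≤ ν → PowerSeries.coeff (R := ℝ) ν B ≤ K₂ * M ν) :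
    ∀ ν : ℕ, 1 ≤ ν →
      PowerSeries.coeff (R := ℝ) ν (pexp A * pexp B - 1)
        ≤ lam⁻¹ * (Real.exp ((K₁ + K₂) * lam) - 1) * M ν := by
  intro ν hν
  set F := majorant (1 / (16 * c)) c
  have hFM (n : ℕ) : coeff n F = M n := by rw [coeff_majorant, hM]
  have hF : ∀ n, 0 ≤ coeff n F := coeff_majorant_nonneg (by positivity) hc.le
  have hFF (n : ℕ) : coeff n (F * F) ≤ lam * coeff n F := by
    refine (coeff_majorant_mul_self_le hc.le n).trans ?_
    gcongr
    · exact hF n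
    · rw [hlam]; field_simp; norm_num
  have extend {P : ℕ → Prop} (h0 : P 0) (h : ∀ n, 1 ≤ n → P n) (n : ℕ) : P n :=
    n.eq_zero_or_pos.elim (· ▸ h0) (h n)
  have hF0 : coeff 0 F = 0 := by rw [coeff_majorant]; simp
  rw [← hFM]
  exact coeff_pexp_mul_pexp_sub_one_le (by rw [hlam]; positivity) hK₁ hK₂ hF hFF
    hA0 (extend (by simp [hA0]) hAnonneg) (extend (by simp [hA0, hF0]) fun n hn => hFM n ▸ hAle n hn)
    hB0 (extend (by simp [hB0]) hBnonneg) (extend (by simp [hB0, hF0]) fun n hn => hFM n ▸ hBle n hn)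
    (by omega)
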